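/- Every non-identity morphism f : X^* → X^* of a filtered simplicial complex satisfies codeg^∞(f, id_{X^*}) ≥ δ(X^*), where δ(X^*) = min over vertices v of min_{w ≠ v} δ_X(v, w). -/

import Mathlib

/-! In a chain `f = F 0, …, F n = id`, look at the last map `F i ≠ id`; it moves some vertex `v`,
and `F (i + 1) = id`. For every `α`, the simplex `F i (α ∪ {v}) ∪ (α ∪ {v})` contains
`α ∪ {F i v}`, so by monotonicity `codeg(F i, id) ≥ δ_X(v, F i v) ≥ δ(X^*)`. -/

open Finset Function

noncomputable section
open scoped Classical

variable {V W U : Type} [Fintype V] [Fintype W] [Fintype U]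

/-- A size function is monotone on nonempty subsets. -/
def Monot (D : Finset V → ℝ) : Prop :=
  ∀ ⦃α β : Finset V⦄, α.Nonempty → α ⊆ β → D α ≤ D β

/-- `max 0 (sup over nonempty subsets of the vertex set of g)`. -/
def supSub (g : Finset V → ℝ) : ℝ :=
  ((Finset.univ : Finset V).powerset.filter Finset.Nonempty).fold max 0 g

/-- Degree of a morphism: least `r ≥ 0` with `D_Y (f α) ≤ D_X α + r` for all nonempty `α`. -/
def degF (DX : Finset V → ℝ) (DY : Finset W → ℝ) (f : V → W) : ℝ :=
  supSub fun α => DY (α.image f) - DX α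

/-- Codegree: least `r ≥ 0` with `D_Y (f α ∪ g α) ≤ D_X α + r` for all nonempty `α`. -/
def codegF (DX : Finset V → ℝ) (DY : Finset W → ℝ) (f g : V → W) : ℝ :=
  supSub fun α => DY (α.image f ∪ α.image g) - DX α

/-- `codeg^∞`: minimum over chains `f = F 0, …, F n = g` of the max codegree of
consecutive terms. -/
def codegInfF (DX : Finset V → ℝ) (DY : Finset W → ℝ) (f g : V → W) : ℝ :=
  sInf { c : ℝ | ∃ n : ℕ, 0 < n ∧ ∃ F : ℕ → V → W, F 0 = f ∧ F n = g ∧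
    c = (Finset.range n).fold max 0 fun i => codegF DX DY (F i) (F (i + 1)) }

/-- `(f, g)` is an `ε`-interleaving between the filtered complexes given by `DX`, `DY`. -/
def IsInterleaving (DX : Finset V → ℝ) (DY : Finset W → ℝ)
    (f : V → W) (g : W → V) (ε : ℝ) : Prop :=
  degF DX DY f ≤ ε ∧ degF DY DX g ≤ ε ∧
  codegInfF DX DX (g ∘ f) id ≤ 2 * ε ∧ codegInfF DY DY (f ∘ g) id ≤ 2 * ε

/-- The interleaving distance between filtered simplicial complexes. -/
def dIF (DX : Finset V → ℝ) (DY : Finset W → ℝ) : ℝ :=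
  sInf { ε : ℝ | 0 ≤ ε ∧ ∃ f g, IsInterleaving DX DY f g ε }

/-- The vertex quasi-distance `δ_X(v,w)`. -/
def vqd (D : Finset V → ℝ) (v w : V) : ℝ :=
  supSub fun α => D (insert w α) - D (insert v α)

/-- Distortion of a correspondence `R ⊆ V × W`, viewed as a tripod via the projections. -/
def corDis (DX : Finset V → ℝ) (DY : Finset W → ℝ) (R : Finset (V × W)) : ℝ :=
  (R.powerset.filter Finset.Nonempty).fold max 0 fun α =>
    |DX (α.image Prod.fst) - DY (α.image Prod.snd)|

/-- Gromov–Hausdorff distance (via correspondences). -/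
def dGHcor (DX : Finset V → ℝ) (DY : Finset W → ℝ) : ℝ :=
  (1 / 2) * sInf { c : ℝ | ∃ R : Finset (V × W),
    (∀ v : V, ∃ w, (v, w) ∈ R) ∧ (∀ w : W, ∃ v, (v, w) ∈ R) ∧ c = corDis DX DY R }

/-- Distortion of a tripod `(Z, p, q)`. -/
def trdis (DX : Finset V → ℝ) (DY : Finset W → ℝ) {Z : Type} [Fintype Z]
    (p : Z → V) (q : Z → W) : ℝ :=
  supSub fun α : Finset Z => |DX (α.image p) - DY (α.image q)|

/-- Gromov–Hausdorff distance between filtered simplicial complexes (via tripods). -/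
def dGHtri (DX : Finset V → ℝ) (DY : Finset W → ℝ) : ℝ :=
  (1 / 2) * sInf { c : ℝ | ∃ (Z : Type) (_i : Fintype Z) (p : Z → V) (q : Z → W),
    Surjective p ∧ Surjective q ∧ c = trdis DX DY p q }

/-- Diameter of a finite subset of a metric space. -/
def fdiam {M : Type} [MetricSpace M] (σ : Finset M) : ℝ :=
  (σ ×ˢ σ).fold max 0 fun p => dist p.1 p.2

/-- Metric distortion of a correspondence between metric spaces. -/
def metDis {M N : Type} [MetricSpace M] [MetricSpace N] (R : Finset (M × N)) : ℝ :=
  (R ×ˢ R).fold max 0 fun p => |dist p.1.1 p.2.1 - dist p.1.2 p.2.2|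

/-- Gromov–Hausdorff distance between finite metric spaces. -/
def dGHmet (M N : Type) [MetricSpace M] [MetricSpace N] : ℝ :=
  (1 / 2) * sInf { c : ℝ | ∃ R : Finset (M × N),
    (∀ x : M, ∃ y, (x, y) ∈ R) ∧ (∀ y : N, ∃ x, (x, y) ∈ R) ∧ c = metDis R }

lemma supSub_nonneg (g : Finset V → ℝ) : 0 ≤ supSub g :=
  (le_fold_max 0).mpr (Or.inl le_rfl)

lemma le_supSub (g : Finset V → ℝ) {α : Finset V} (hα : α.Nonempty) : g α ≤ supSub g :=
  (le_fold_max _).mpr (Or.inr ⟨α, by simp [hα], le_rfl⟩)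

lemma supSub_le {g : Finset V → ℝ} {r : ℝ} (h0 : 0 ≤ r)
    (h : ∀ α : Finset V, α.Nonempty → g α ≤ r) : supSub g ≤ r :=
  (fold_max_le _).mpr ⟨h0, fun α hα => h α (mem_filter.mp hα).2⟩

lemma vqd_le_codegF_id {D : Finset V → ℝ} (hD : Monot D) {g : V → V} (v : V) :
    vqd D v (g v) ≤ codegF D D g id := by
  refine supSub_le (supSub_nonneg _) fun α _ => ?_
  have hsub : insert (g v) α ⊆ (insert v α).image g ∪ (insert v α).image id := by
    intro x hx
    rcases mem_insert.mp hx with rfl | hxα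
    · exact mem_union_left _ (mem_image_of_mem g (mem_insert_self v α))
    · exact mem_union_right _ (mem_image_of_mem id (mem_insert_of_mem hxα))
  have hcodeg := le_supSub (fun γ => D (γ.image g ∪ γ.image id) - D γ) (insert_nonempty v α)
  have hmono := hD (insert_nonempty (g v) α) hsub
  simp only [codegF] at hcodeg ⊢
  linarith

lemma bddBelow_vqd (D : Finset V → ℝ) :
    BddBelow { d : ℝ | ∃ v w : V, w ≠ v ∧ d = vqd D v w } :=
  ⟨0, by rintro d ⟨v, w, -, rfl⟩; exact supSub_nonneg _⟩

lemma exists_lt_ne_and_succ_eq {α : Type*} {F : ℕ → α} {a : α} (h0 : F 0 ≠ a) :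
    ∀ {n : ℕ}, F n = a → ∃ i < n, F i ≠ a ∧ F (i + 1) = a
  | 0, hn => absurd hn h0
  | n + 1, hn => by
    by_cases hFn : F n = a
    · obtain ⟨i, hi, hFi⟩ := exists_lt_ne_and_succ_eq h0 hFn
      exact ⟨i, hi.trans n.lt_succ_self, hFi⟩
    · exact ⟨n, n.lt_succ_self, hFn, hn⟩

/-- every non-identity self-morphism `f` satisfies
`codeg^∞(f, id) ≥ δ(X^*)`, where `δ(X^*) = min_v min_{w ≠ v} δ_X(v, w)`. -/
theorem stmt_17 (D : Finset V → ℝ) (hD : Monot D) (f : V → V) (hf : f ≠ id) :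
    sInf { d : ℝ | ∃ v w : V, w ≠ v ∧ d = vqd D v w } ≤ codegInfF D D f id := by
  refine le_csInf ⟨_, 1, one_pos, fun i => if i = 0 then f else id, by simp, by simp, rfl⟩ ?_
  rintro c ⟨n, -, F, hF0, hFn, rfl⟩
  obtain ⟨i, hin, hFi, hFi1⟩ := exists_lt_ne_and_succ_eq (hF0 ▸ hf) hFn
  obtain ⟨v, hv⟩ := ne_iff.mp hFi
  calc sInf _ ≤ vqd D v (F i v) := csInf_le (bddBelow_vqd D) ⟨v, F i v, hv, rfl⟩
    _ ≤ codegF D D (F i) (F (i + 1)) := hFi1 ▸ vqd_le_codegF_id hD v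
    _ ≤ _ := (le_fold_max _).mpr (Or.inr ⟨i, mem_range.mpr hin, le_rfl⟩)
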